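/- arXiv:2011.06114 — 2 statements merged into one kernel-verified Lean document; each statement's English description precedes it below -/
import Mathlib

section
/- Assume quasi-symmetry. Let ξ be a nonzero linear functional on ℝ^k and F_ξ = {x∈∇ : ξ(x) = max_{y∈∇} ξ(y)} the face of ∇ exposed by ξ. Then the affine hull of F_ξ satisfies Aff(F_ξ) = (1/2)∑_{i : ξ(β_i)>0} β_i − C_0, where C_0 is the convex cone generated by {β_i : ξ(β_i) = 0}; moreover C_0 equals the linear span of {β_i : ξ(β_i) = 0}. -/
open Pointwise
open scoped Classical

noncomputable section

/-- The zonotope `∇ = (1/2)∑_i [0, β_i]`. -/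
def nabla {N k : ℕ} (β : Fin N → (Fin k → ℝ)) : Set (Fin k → ℝ) :=
  (2⁻¹ : ℝ) • ∑ i : Fin N, segment ℝ 0 (β i)

/-- The face `F_ξ` of `∇` exposed by the linear functional `ξ`. -/
def exposedFace {N k : ℕ} (β : Fin N → (Fin k → ℝ))
    (ξ : (Fin k → ℝ) →ₗ[ℝ] ℝ) : Set (Fin k → ℝ) :=
  {x ∈ nabla β | ∀ y ∈ nabla β, ξ y ≤ ξ x}

/-- The convex cone `C₀` generated by `{β_i : ξ(β_i) = 0}`. -/
def coneZero {N k : ℕ} (β : Fin N → (Fin k → ℝ))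
    (ξ : (Fin k → ℝ) →ₗ[ℝ] ℝ) : Set (Fin k → ℝ) :=
  {y | ∃ c : Fin N → ℝ, (∀ i, 0 ≤ c i) ∧ (∀ i, ξ (β i) ≠ 0 → c i = 0) ∧
    y = ∑ i, c i • β i}

/-!
For `t ∈ [0,1]^N` the value `ξ(½ ∑ tᵢ βᵢ) = ½ ∑ tᵢ ξ(βᵢ)` is maximal exactly when `tᵢ = 1` for
`ξ(βᵢ) > 0` and `tᵢ = 0` for `ξ(βᵢ) < 0`, the coefficients with `ξ(βᵢ) = 0` being free. Hence
`F_ξ` contains the vertex `b = ½ ∑_{ξ(βᵢ)>0} βᵢ` together with `b + ½ βᵢ` for every `ξ(βᵢ) = 0`,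
and all its points differ from `b` by a combination of those `βᵢ`: its affine hull is
`b + span {βᵢ : ξ(βᵢ) = 0}`. Quasi-symmetry on the line `ℝ βᵢ` writes `-βᵢ` as the sum of the other
`βⱼ` on that line, all of which are killed by `ξ`; so `C₀` is closed under negation and is
therefore the linear span.
-/

open Set

lemma mul_le_ite_pos {t a : ℝ} (ht : t ∈ Icc (0 : ℝ) 1) : t * a ≤ if 0 < a then a else 0 := by
  obtain ⟨h0, h1⟩ := ht
  split_ifs with ha <;> nlinarith

lemma mul_eq_ite_pos_iff {t a : ℝ} :
    t * a = (if 0 < a then a else 0) ↔ (0 < a → t = 1) ∧ (a < 0 → t = 0) := by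
  rcases lt_trichotomy a 0 with ha | rfl | ha
  · simp [ha.not_gt, ha, ha.ne]
  · simp
  · simp [ha, ha.not_gt, mul_eq_right₀ ha.ne']

lemma sum_mul_eq_sum_ite_pos_iff {ι : Type*} [Fintype ι] {t a : ι → ℝ} (ht : t ∈ Icc 0 1) :
    ∑ i, t i * a i = ∑ i, (if 0 < a i then a i else 0) ↔
      ∀ i, (0 < a i → t i = 1) ∧ (a i < 0 → t i = 0) := by
  rw [Finset.sum_eq_sum_iff_of_le fun i _ => mul_le_ite_pos ⟨ht.1 i, ht.2 i⟩]
  simp only [Finset.mem_univ, true_implies]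
  exact forall_congr' fun i => mul_eq_ite_pos_iff

section

variable {N k : ℕ} {β : Fin N → (Fin k → ℝ)} {ξ : (Fin k → ℝ) →ₗ[ℝ] ℝ}

lemma mem_nabla_iff {x : Fin k → ℝ} :
    x ∈ nabla β ↔ ∃ t ∈ Icc (0 : Fin N → ℝ) 1, x = (2⁻¹ : ℝ) • ∑ i, t i • β i := by
  simp only [nabla, ← parallelepiped_eq_sum_segment, Set.mem_smul_set, mem_parallelepiped_iff]
  constructor
  · rintro ⟨_, ⟨t, ht, rfl⟩, rfl⟩
    exact ⟨t, ht, rfl⟩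
  · rintro ⟨t, ht, rfl⟩
    exact ⟨_, ⟨t, ht, rfl⟩, rfl⟩

lemma apply_half_sum_smul (t : Fin N → ℝ) :
    ξ ((2⁻¹ : ℝ) • ∑ i, t i • β i) = 2⁻¹ * ∑ i, t i * ξ (β i) := by
  simp [map_sum]

variable (β ξ) in
def maxVertex : Fin k → ℝ :=
  (2⁻¹ : ℝ) • ∑ i ∈ Finset.univ.filter (fun i => 0 < ξ (β i)), β i

lemma maxVertex_eq :
    maxVertex β ξ = (2⁻¹ : ℝ) • ∑ i, (if 0 < ξ (β i) then (1 : ℝ) else 0) • β i := by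
  simp [maxVertex, Finset.sum_filter, ite_smul]

lemma apply_maxVertex :
    ξ (maxVertex β ξ) = 2⁻¹ * ∑ i, if 0 < ξ (β i) then ξ (β i) else 0 := by
  rw [maxVertex_eq, apply_half_sum_smul]
  simp [ite_mul]

lemma apply_le_apply_maxVertex {y : Fin k → ℝ} (hy : y ∈ nabla β) :
    ξ y ≤ ξ (maxVertex β ξ) := by
  obtain ⟨t, ht, rfl⟩ := mem_nabla_iff.mp hy
  rw [apply_half_sum_smul, apply_maxVertex]
  gcongr with i
  exact mul_le_ite_pos ⟨ht.1 i, ht.2 i⟩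

lemma maxVertex_mem_nabla : maxVertex β ξ ∈ nabla β := by
  refine mem_nabla_iff.mpr ⟨_, ⟨fun i => ?_, fun i => ?_⟩, maxVertex_eq⟩ <;>
    dsimp <;> split_ifs <;> norm_num

lemma mem_exposedFace_iff_apply_eq {x : Fin k → ℝ} :
    x ∈ exposedFace β ξ ↔ x ∈ nabla β ∧ ξ x = ξ (maxVertex β ξ) := by
  refine ⟨fun ⟨hx, hmax⟩ => ⟨hx, ?_⟩, fun ⟨hx, heq⟩ => ⟨hx, fun y hy => ?_⟩⟩
  · exact (apply_le_apply_maxVertex hx).antisymm (hmax _ maxVertex_mem_nabla)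
  · exact heq ▸ apply_le_apply_maxVertex hy

lemma mem_exposedFace_iff {x : Fin k → ℝ} :
    x ∈ exposedFace β ξ ↔ ∃ t ∈ Icc (0 : Fin N → ℝ) 1,
      (∀ i, (0 < ξ (β i) → t i = 1) ∧ (ξ (β i) < 0 → t i = 0)) ∧
      x = (2⁻¹ : ℝ) • ∑ i, t i • β i := by
  have key : ∀ t ∈ Icc (0 : Fin N → ℝ) 1,
      ξ ((2⁻¹ : ℝ) • ∑ i, t i • β i) = ξ (maxVertex β ξ) ↔
        ∀ i, (0 < ξ (β i) → t i = 1) ∧ (ξ (β i) < 0 → t i = 0) := fun t ht => by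
    rw [apply_half_sum_smul, apply_maxVertex, mul_right_inj' (by norm_num)]
    exact sum_mul_eq_sum_ite_pos_iff ht
  simp only [mem_exposedFace_iff_apply_eq, mem_nabla_iff]
  constructor
  · rintro ⟨⟨t, ht, rfl⟩, heq⟩
    exact ⟨t, ht, (key t ht).mp heq, rfl⟩
  · rintro ⟨t, ht, hcoef, rfl⟩
    exact ⟨⟨t, ht, rfl⟩, (key t ht).mpr hcoef⟩

lemma maxVertex_mem_exposedFace : maxVertex β ξ ∈ exposedFace β ξ :=
  mem_exposedFace_iff_apply_eq.mpr ⟨maxVertex_mem_nabla, rfl⟩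

lemma maxVertex_add_mem_exposedFace {i : Fin N} (hi : ξ (β i) = 0) :
    maxVertex β ξ + (2⁻¹ : ℝ) • β i ∈ exposedFace β ξ := by
  have hji : ∀ j, ξ (β j) ≠ 0 → j ≠ i := fun j h hj => h (hj ▸ hi)
  have hmem : ∀ j, ((if 0 < ξ (β j) then 1 else 0) + if j = i then 1 else 0 : ℝ) ∈ Icc 0 1 := by
    intro j
    rcases eq_or_ne j i with rfl | hj
    · simp [hi]
    · simp only [hj, if_false, add_zero]
      split_ifs <;> norm_num
  refine mem_exposedFace_iff.mpr
    ⟨fun j => (if 0 < ξ (β j) then 1 else 0) + if j = i then 1 else 0,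
      ⟨fun j => (hmem j).1, fun j => (hmem j).2⟩,
      fun j => ⟨fun h => ?_, fun h => ?_⟩, ?_⟩
  · simp [h, hji j h.ne']
  · simp [h.not_gt, hji j h.ne]
  · simp [maxVertex_eq, add_smul, Finset.sum_add_distrib, smul_add]

variable (β ξ) in
def zeroSpan : Submodule ℝ (Fin k → ℝ) :=
  Submodule.span ℝ {x | ∃ i, ξ (β i) = 0 ∧ β i = x}

lemma sum_smul_mem_zeroSpan {c : Fin N → ℝ} (hc : ∀ i, ξ (β i) ≠ 0 → c i = 0) :
    ∑ i, c i • β i ∈ zeroSpan β ξ := by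
  refine Submodule.sum_mem _ fun i _ => ?_
  by_cases hi : ξ (β i) = 0
  · exact Submodule.smul_mem _ _ (Submodule.subset_span ⟨i, hi, rfl⟩)
  · simp [hc i hi]

lemma sub_maxVertex_mem_zeroSpan {x : Fin k → ℝ} (hx : x ∈ exposedFace β ξ) :
    x - maxVertex β ξ ∈ zeroSpan β ξ := by
  obtain ⟨t, -, hcoef, rfl⟩ := mem_exposedFace_iff.mp hx
  simp_rw [maxVertex_eq, ← smul_sub, ← Finset.sum_sub_distrib, ← sub_smul]
  refine Submodule.smul_mem _ _ (sum_smul_mem_zeroSpan fun i hi => ?_)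
  rcases hi.lt_or_gt with hneg | hpos
  · simp [(hcoef i).2 hneg, hneg.not_gt]
  · simp [(hcoef i).1 hpos, hpos]

lemma vectorSpan_exposedFace : vectorSpan ℝ (exposedFace β ξ) = zeroSpan β ξ := by
  apply le_antisymm
  · rw [vectorSpan_def, Submodule.span_le]
    rintro _ ⟨x, hx, y, hy, rfl⟩
    have h := sub_mem (sub_maxVertex_mem_zeroSpan hx) (sub_maxVertex_mem_zeroSpan hy)
    rwa [sub_sub_sub_cancel_right] at h
  · refine Submodule.span_le.mpr ?_
    rintro _ ⟨i, hi, rfl⟩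
    have h := vsub_mem_vectorSpan ℝ (maxVertex_add_mem_exposedFace hi) maxVertex_mem_exposedFace
    rw [vsub_eq_sub, add_sub_cancel_left] at h
    simpa using Submodule.smul_mem _ (2 : ℝ) h

lemma affineSpan_exposedFace :
    affineSpan ℝ (exposedFace β ξ) = AffineSubspace.mk' (maxVertex β ξ) (zeroSpan β ξ) :=
  AffineSubspace.ext_of_direction_eq
    (by rw [direction_affineSpan, AffineSubspace.direction_mk', vectorSpan_exposedFace])
    ⟨_, subset_affineSpan ℝ _ maxVertex_mem_exposedFace, AffineSubspace.self_mem_mk' _ _⟩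

variable (β) in
def IsQuasiSymmetric : Prop :=
  ∀ L : Submodule ℝ (Fin k → ℝ), Module.finrank ℝ L = 1 →
    ∑ i ∈ Finset.univ.filter (fun i => β i ∈ L), β i = 0

variable (β ξ) in
def coneZeroPointedCone : PointedCone ℝ (Fin k → ℝ) where
  carrier := coneZero β ξ
  zero_mem' := ⟨0, fun _ => le_rfl, fun _ _ => rfl, by simp⟩
  add_mem' := by
    rintro _ _ ⟨c, hc0, hcz, rfl⟩ ⟨d, hd0, hdz, rfl⟩
    exact ⟨c + d, fun i => add_nonneg (hc0 i) (hd0 i), fun i hi => by simp [hcz i hi, hdz i hi],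
      by simp [add_smul, Finset.sum_add_distrib]⟩
  smul_mem' := by
    rintro r _ ⟨c, hc0, hcz, rfl⟩
    exact ⟨(r : ℝ) • c, fun i => mul_nonneg r.2 (hc0 i), fun i hi => by simp [hcz i hi],
      by simp [← Nonneg.coe_smul, Finset.smul_sum, smul_smul]⟩

lemma mem_coneZero_of_apply_eq_zero {i : Fin N} (hi : ξ (β i) = 0) : β i ∈ coneZero β ξ :=
  ⟨fun j => if j = i then 1 else 0, fun j => by positivity,
    fun j hj => if_neg fun (h : j = i) => hj (h ▸ hi), by simp [ite_smul]⟩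

lemma neg_mem_coneZero (hqs : IsQuasiSymmetric β) {i : Fin N} (hi : ξ (β i) = 0) :
    -β i ∈ coneZero β ξ := by
  rcases eq_or_ne (β i) 0 with h0 | h0
  · rw [h0, neg_zero]
    exact (coneZeroPointedCone β ξ).zero_mem
  set F := Finset.univ.filter (fun j => β j ∈ ℝ ∙ β i)
  have hiF : i ∈ F := by simp [F, Submodule.mem_span_singleton_self]
  have hsum : β i + ∑ j ∈ F.erase i, β j = 0 := by
    rw [Finset.add_sum_erase F β hiF]
    exact hqs _ (finrank_span_singleton h0)
  rw [neg_eq_of_add_eq_zero_right hsum]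
  refine (coneZeroPointedCone β ξ).sum_mem fun j hj => mem_coneZero_of_apply_eq_zero ?_
  obtain ⟨r, hr⟩ :=
    Submodule.mem_span_singleton.mp (Finset.mem_filter.mp (Finset.mem_of_mem_erase hj)).2
  rw [← hr, map_smul, hi, smul_zero]

lemma coneZero_subset_zeroSpan : coneZero β ξ ⊆ zeroSpan β ξ := by
  rintro _ ⟨c, -, hcz, rfl⟩
  exact sum_smul_mem_zeroSpan hcz

lemma coneZero_eq_zeroSpan (hqs : IsQuasiSymmetric β) :
    coneZero β ξ = zeroSpan β ξ := by
  refine coneZero_subset_zeroSpan.antisymm fun x hx => ?_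
  have hlineal : zeroSpan β ξ ≤ (coneZeroPointedCone β ξ).lineal := by
    refine Submodule.span_le.mpr ?_
    rintro _ ⟨i, hi, rfl⟩
    exact ⟨mem_coneZero_of_apply_eq_zero hi, neg_mem_coneZero hqs hi⟩
  exact (hlineal hx).1

end

theorem affine_hull_of_exposed_face_general
    {N k : ℕ}
    (β : Fin N → (Fin k → ℝ))
    (hqs : ∀ L : Submodule ℝ (Fin k → ℝ), Module.finrank ℝ L = 1 →
      ∑ i ∈ Finset.univ.filter (fun i => β i ∈ L), β i = 0)
    (ξ : (Fin k → ℝ) →ₗ[ℝ] ℝ) :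
    ((affineSpan ℝ (exposedFace β ξ) : Set (Fin k → ℝ)) =
      {x | ∃ c ∈ coneZero β ξ,
        x = (2⁻¹ : ℝ) • (∑ i ∈ Finset.univ.filter (fun i => 0 < ξ (β i)), β i) - c}) ∧
    coneZero β ξ =
      (Submodule.span ℝ {x | ∃ i, ξ (β i) = 0 ∧ β i = x} : Set (Fin k → ℝ)) := by
  have hcone : coneZero β ξ = zeroSpan β ξ := coneZero_eq_zeroSpan hqs
  refine ⟨?_, hcone⟩
  ext x
  rw [affineSpan_exposedFace, SetLike.mem_coe, AffineSubspace.mem_mk', vsub_eq_sub, hcone]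
  constructor
  · intro hx
    exact ⟨maxVertex β ξ - x, by simpa using neg_mem hx, (sub_sub_cancel _ _).symm⟩
  · rintro ⟨c, hc, rfl⟩
    simpa [maxVertex] using neg_mem hc

/-- **Lemma.** Under quasi-symmetry, the affine hull of the exposed face `F_ξ` is
`Aff(F_ξ) = (1/2)∑_{ξ(β_i)>0} β_i − C₀`, where `C₀` is the convex cone generated
by `{β_i : ξ(β_i) = 0}`, and moreover `C₀` equals the linear span of that set. -/
theorem affine_hull_of_exposed_face
    {N k : ℕ} (hk : 1 ≤ k) (hNk : k ≤ N)
    (μ : (Fin N → ℝ) →ₗ[ℝ] (Fin k → ℝ))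
    (hsurj : Function.Surjective μ)
    (β : Fin N → (Fin k → ℝ)) (hβ : ∀ i, β i = μ (Pi.single i 1))
    (hβ0 : ∀ i, β i ≠ 0)
    (hspan : Submodule.span ℝ (Set.range β) = ⊤)
    (hqs : ∀ L : Submodule ℝ (Fin k → ℝ), Module.finrank ℝ L = 1 →
      ∑ i ∈ Finset.univ.filter (fun i => β i ∈ L), β i = 0)
    (ξ : (Fin k → ℝ) →ₗ[ℝ] ℝ) (hξ : ξ ≠ 0) :
    ((affineSpan ℝ (exposedFace β ξ) : Set (Fin k → ℝ)) =
      {x | ∃ c ∈ coneZero β ξ,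
        x = (2⁻¹ : ℝ) • (∑ i ∈ Finset.univ.filter (fun i => 0 < ξ (β i)), β i) - c}) ∧
    coneZero β ξ =
      (Submodule.span ℝ {x | ∃ i, ξ (β i) = 0 ∧ β i = x} : Set (Fin k → ℝ)) :=
  affine_hull_of_exposed_face_general β hqs ξ
end
end

section
/- Assume quasi-symmetry. Then for every linear subspace V ⊆ ℝ^k, the convex cone generated by {β_i : β_i ∈ V} equals the linear span of {β_i : β_i ∈ V}. -/
open scoped Classical

/-!
Quasi-symmetry applied to the line through `β j` writes `-β j` as the sum of the other `β i` on
that line, and these lie in `V` whenever `β j` does. So the cone generated by the `β i ∈ V`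
contains the negatives of its generators; its lineality space is then a subspace containing the
generators, and the cone is their whole span.
-/

open Finset Module

namespace PointedCone

variable {R E : Type*} [Ring R] [LinearOrder R] [IsOrderedRing R] [AddCommGroup E] [Module R E]

theorem coe_hull_eq_span_of_neg_mem {s : Set E} (hs : ∀ x ∈ s, -x ∈ hull R s) :
    (hull R s : Set E) = Submodule.span R s := by
  refine subset_antisymm (hull_le_span R s) fun x hx => lineal_le _ ?_
  refine (Submodule.span_le (p := (hull R s).lineal)).mpr (fun y hy => ?_) hx
  exact mem_lineal.mpr ⟨subset_hull hy, hs y hy⟩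

theorem mem_hull_image_iff {ι : Type*} [Fintype ι] {v : ι → E} {s : Set ι} {x : E} :
    x ∈ hull R (v '' s) ↔
      ∃ c : ι → R, (∀ i, 0 ≤ c i) ∧ (∀ i ∉ s, c i = 0) ∧ x = ∑ i, c i • v i := by
  rw [Finsupp.mem_span_image_iff_linearCombination]
  constructor
  · rintro ⟨l, hl, rfl⟩
    refine ⟨fun i => l i, fun i => (l i).2, fun i hi => ?_, ?_⟩
    · simp [(Finsupp.mem_supported' _ l).mp hl i hi]
    · rw [Finsupp.linearCombination_apply, Finsupp.sum_fintype _ _ (by simp)]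
      rfl
  · rintro ⟨c, hc, hcs, rfl⟩
    refine ⟨Finsupp.equivFunOnFinite.symm fun i => ⟨c i, hc i⟩, ?_, ?_⟩
    · exact (Finsupp.mem_supported' _ _).mpr fun i hi => Subtype.ext (hcs i hi)
    · rw [Finsupp.linearCombination_apply, Finsupp.sum_fintype _ _ (by simp)]
      rfl

end PointedCone

section QuasiSymmetric

variable (𝕜 : Type*) {ι E : Type*} [Field 𝕜] [LinearOrder 𝕜] [IsOrderedRing 𝕜] [Fintype ι]
  [AddCommGroup E] [Module 𝕜 E]

def QuasiSymmetric (β : ι → E) : Prop :=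
  ∀ L : Submodule 𝕜 E, finrank 𝕜 L = 1 → ∑ i ∈ univ.filter (fun i => β i ∈ L), β i = 0

variable {𝕜}

theorem QuasiSymmetric.neg_mem_hull {β : ι → E} (hβ : QuasiSymmetric 𝕜 β)
    {V : Submodule 𝕜 E} {j : ι} (hj : β j ∈ V) (hj0 : β j ≠ 0) :
    -β j ∈ PointedCone.hull 𝕜 (β '' {i | β i ∈ V}) := by
  set L := 𝕜 ∙ β j
  have hLV : L ≤ V := (Submodule.span_singleton_le_iff_mem _ _).mpr hj
  have hjL : j ∈ univ.filter (fun i => β i ∈ L) := by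
    simp [L, Submodule.mem_span_singleton_self]
  have hneg : -β j = ∑ i ∈ (univ.filter (fun i => β i ∈ L)).erase j, β i := by
    rw [sum_erase_eq_sub hjL, hβ L (finrank_span_singleton hj0), zero_sub]
  rw [hneg]
  refine Submodule.sum_mem _ fun i hi => PointedCone.subset_hull ⟨i, hLV ?_, rfl⟩
  exact (mem_filter.mp (mem_of_mem_erase hi)).2

end QuasiSymmetric

theorem cone_eq_span_of_betas_in_subspace_general
    {N k : ℕ}
    (β : Fin N → (Fin k → ℝ))
    (hβ0 : ∀ i, β i ≠ 0)
    -- quasi-symmetry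
    (hqs : ∀ L : Submodule ℝ (Fin k → ℝ), Module.finrank ℝ L = 1 →
      ∑ i ∈ Finset.univ.filter (fun i => β i ∈ L), β i = 0)
    (V : Submodule ℝ (Fin k → ℝ)) :
    {y : Fin k → ℝ | ∃ c : Fin N → ℝ, (∀ i, 0 ≤ c i) ∧
        (∀ i, β i ∉ V → c i = 0) ∧ y = ∑ i, c i • β i} =
      (Submodule.span ℝ {x | ∃ i, β i ∈ V ∧ β i = x} : Set (Fin k → ℝ)) := by
  have hneg : ∀ x ∈ β '' {i | β i ∈ V}, -x ∈ PointedCone.hull ℝ (β '' {i | β i ∈ V}) := by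
    rintro _ ⟨j, hj, rfl⟩
    exact QuasiSymmetric.neg_mem_hull hqs hj (hβ0 j)
  calc _ = (PointedCone.hull ℝ (β '' {i | β i ∈ V}) : Set (Fin k → ℝ)) := by
        ext y
        exact PointedCone.mem_hull_image_iff.symm
    _ = _ := PointedCone.coe_hull_eq_span_of_neg_mem hneg

/-- **Lemma.** Under quasi-symmetry, for every linear subspace `V ⊆ ℝ^k`, the
convex cone generated by `{β_i : β_i ∈ V}` equals the linear span of
`{β_i : β_i ∈ V}`. -/
theorem cone_eq_span_of_betas_in_subspace
    {N k : ℕ} (hk : 1 ≤ k) (hNk : k ≤ N)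
    (μ : (Fin N → ℝ) →ₗ[ℝ] (Fin k → ℝ))
    (hsurj : Function.Surjective μ)
    (β : Fin N → (Fin k → ℝ)) (hβ : ∀ i, β i = μ (Pi.single i 1))
    (hβ0 : ∀ i, β i ≠ 0)
    (hspan : Submodule.span ℝ (Set.range β) = ⊤)
    -- quasi-symmetry
    (hqs : ∀ L : Submodule ℝ (Fin k → ℝ), Module.finrank ℝ L = 1 →
      ∑ i ∈ Finset.univ.filter (fun i => β i ∈ L), β i = 0)
    (V : Submodule ℝ (Fin k → ℝ)) :
    {y : Fin k → ℝ | ∃ c : Fin N → ℝ, (∀ i, 0 ≤ c i) ∧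
        (∀ i, β i ∉ V → c i = 0) ∧ y = ∑ i, c i • β i} =
      (Submodule.span ℝ {x | ∃ i, β i ∈ V ∧ β i = x} : Set (Fin k → ℝ)) :=
  cone_eq_span_of_betas_in_subspace_general β hβ0 hqs V
end
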